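/- Let Δ° denote the set of vectors in ℝ^C with strictly positive coordinates summing to 1, and let D_KL(a‖b) = Σᵢ aᵢ log(aᵢ/bᵢ). Let Δ ⊆ ℝ^C be the (closed) probability simplex with metric projection Π_Δ, let g : ℝ^C → ℝ^C satisfy, for all p₁, p₂ ∈ Δ°, ⟨g(p₁) − g(p₂), p₁ − p₂⟩ ≥ μ‖p₁ − p₂‖² and ‖g(p₁) − g(p₂)‖ ≤ L‖p₁ − p₂‖, and define F_η(p) = Π_Δ(p − η g(p)). Fix η ≥ 0 with γ := η(2μ − ηL²) satisfying 0 ≤ γ ≤ 1, and fix δ > 0. Then for all p₁, p₂ ∈ Δ° such that every coordinate of F_η(p₁) and F_η(p₂) is at least δ, one has D_KL(F_η(p₁)‖F_η(p₂)) ≤ (2(1 − γ)/δ)·D_KL(p₁‖p₂). In particular F_η is a KL contraction on such pairs whenever 2(1 − γ)/δ < 1. -/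
import Mathlib


open scoped RealInnerProductSpace

/-- Kullback–Leibler divergence on `ℝ^C` (with the Euclidean norm structure). -/
noncomputable def DKL {C : ℕ} (a b : EuclideanSpace ℝ (Fin C)) : ℝ :=
  ∑ i, a i * Real.log (a i / b i)

/-- Interior of the probability simplex in `ℝ^C`. -/
def simplexInterior (C : ℕ) : Set (EuclideanSpace ℝ (Fin C)) :=
  {p | (∀ i, 0 < p i) ∧ ∑ i, p i = 1}

/-- Closed probability simplex in `ℝ^C`. -/
def probSimplex (C : ℕ) : Set (EuclideanSpace ℝ (Fin C)) :=
  {p | (∀ i, 0 ≤ p i) ∧ ∑ i, p i = 1}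

lemma log_lb {x : ℝ} (hx : 1 ≤ x) : 2*(x-1)/(x+1) ≤ Real.log x := by
  have hmono : MonotoneOn (fun t : ℝ => Real.log t - 2*(t-1)/(t+1)) (Set.Ici 1) := by
    have hder : ∀ y ∈ Set.Ioi (1:ℝ),
        HasDerivAt (fun t : ℝ => Real.log t - 2*(t-1)/(t+1))
          (y⁻¹ - (2*1*(y+1) - 2*(y-1)*1)/(y+1)^2) y := by
      intro y hy
      have hy0 : (0:ℝ) < y := lt_trans one_pos hy
      have h1 : HasDerivAt (fun t : ℝ => 2*(t-1)) (2*1) y :=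
        ((hasDerivAt_id y).sub_const 1).const_mul 2
      have h2 : HasDerivAt (fun t : ℝ => t+1) 1 y := (hasDerivAt_id y).add_const 1
      exact (Real.hasDerivAt_log hy0.ne').sub (h1.div h2 (by linarith))
    apply monotoneOn_of_deriv_nonneg (convex_Ici 1)
    · apply ContinuousOn.sub (Real.continuousOn_log.mono ?_)
      · exact ContinuousOn.div (by fun_prop) (by fun_prop) (by intro t ht; simp at ht; dsimp; linarith)
      · intro t ht; simp at ht ⊢; linarith
    · intro y hy
      rw [interior_Ici] at hy
      exact ((hder y hy).differentiableAt).differentiableWithinAt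
    · intro y hy
      rw [interior_Ici] at hy
      rw [(hder y hy).deriv]
      have hy0 : (0:ℝ) < y := lt_trans one_pos hy
      have : (2*1*(y+1) - 2*(y-1)*1)/(y+1)^2 ≤ y⁻¹ := by
        rw [inv_eq_one_div, div_le_div_iff₀ (by positivity) hy0]
        nlinarith [sq_nonneg (y-1)]
      linarith
  have h := hmono (Set.self_mem_Ici) (Set.mem_Ici.mpr hx) hx
  simp at h
  linarith [h]


lemma log_ub {x : ℝ} (hx : 1 ≤ x) : Real.log x ≤ (x - 1/x)/2 := by
  have hmono : MonotoneOn (fun t : ℝ => (t - 1/t)/2 - Real.log t) (Set.Ici 1) := by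
    have hder : ∀ y ∈ Set.Ioi (1:ℝ),
        HasDerivAt (fun t : ℝ => (t - 1/t)/2 - Real.log t)
          ((1 - (0*y - 1*1)/y^2)/2 - y⁻¹) y := by
      intro y hy
      have hy0 : (0:ℝ) < y := lt_trans one_pos hy
      have h1 : HasDerivAt (fun t : ℝ => t - 1/t) (1 - (0*y - 1*1)/y^2) y :=
        (hasDerivAt_id y).sub ((hasDerivAt_const y 1).div (hasDerivAt_id y) hy0.ne')
      exact (h1.div_const 2).sub (Real.hasDerivAt_log hy0.ne')
    apply monotoneOn_of_deriv_nonneg (convex_Ici 1)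
    · apply ContinuousOn.sub
      · apply ContinuousOn.div_const
        exact ContinuousOn.sub (by fun_prop) (ContinuousOn.div (by fun_prop) (by fun_prop)
          (by intro t ht; simp at ht; dsimp; linarith))
      · exact Real.continuousOn_log.mono (by intro t ht; simp at ht ⊢; linarith)
    · intro y hy
      rw [interior_Ici] at hy
      exact ((hder y hy).differentiableAt).differentiableWithinAt
    · intro y hy
      rw [interior_Ici] at hy
      rw [(hder y hy).deriv]
      have hy0 : (0:ℝ) < y := lt_trans one_pos hy
      have h2 : y⁻¹ ≤ (1 - (0*y - 1*1)/y^2)/2 := by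
        rw [inv_eq_one_div, div_le_div_iff₀ hy0 (by norm_num)]
        have hy1 : (1:ℝ) < y := hy
        have hyy : (1 - (0*y - 1*1)/y^2)*y - 1*2 = (y-1)^2/y := by
          field_simp; ring
        nlinarith [div_nonneg (sq_nonneg (y-1)) hy0.le]
      linarith
  have h := hmono (Set.self_mem_Ici) (Set.mem_Ici.mpr hx) hx
  simp only [one_div] at h ⊢
  simp at h
  linarith [h]


lemma chi_pt {a b δ : ℝ} (hδ : 0 < δ) (ha : 0 ≤ a) (hb : δ ≤ b) :
    a * Real.log (a/b) ≤ (a - b) + (a-b)^2/δ := by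
  have hb0 : 0 < b := lt_of_lt_of_le hδ hb
  rcases eq_or_lt_of_le ha with h0 | ha0
  · rw [← h0]
    simp only [zero_mul]
    have : (0 - b) + (0-b)^2/δ = b*(b-δ)/δ := by field_simp; ring
    rw [this]
    have hbd : 0 ≤ b - δ := sub_nonneg.mpr hb
    positivity
  · have hlog : Real.log (a/b) ≤ a/b - 1 := Real.log_le_sub_one_of_pos (by positivity)
    have h1 : a * Real.log (a/b) ≤ a * (a/b - 1) := mul_le_mul_of_nonneg_left hlog ha
    have h2 : a * (a/b - 1) = (a - b) + (a-b)^2/b := by field_simp; ring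
    have h3 : (a-b)^2/b ≤ (a-b)^2/δ := by gcongr
    linarith



lemma pinsker_pt {a b : ℝ} (ha0 : 0 < a) (ha1 : a ≤ 1) (hb0 : 0 < b) (hb1 : b ≤ 1) :
    (a - b) + (a - b)^2/2 ≤ a * Real.log (a/b) := by
  rcases le_or_gt b a with hab | hab
  · have hx : 1 ≤ a/b := (le_div_iff₀ hb0).mpr (by linarith)
    have h := log_lb hx
    have heq : 2*(a/b-1)/(a/b+1) = 2*(a-b)/(a+b) := by
      rw [div_eq_div_iff (by positivity) (by positivity)]
      field_simp
    rw [heq] at h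
    have h' : 2*(a-b) ≤ Real.log (a/b) * (a+b) := (div_le_iff₀ (by positivity)).mp h
    nlinarith [mul_le_mul_of_nonneg_left h' ha0.le, sq_nonneg (a-b),
      mul_nonneg (sq_nonneg (a-b)) (by linarith : (0:ℝ) ≤ 2 - (a+b))]
  · have hx : 1 ≤ b/a := (le_div_iff₀ ha0).mpr (by linarith)
    have h := log_ub hx
    have h1 : 1/(b/a) = a/b := one_div_div b a
    rw [h1] at h
    have hlog : Real.log (a/b) = - Real.log (b/a) := by
      rw [Real.log_div ha0.ne' hb0.ne', Real.log_div hb0.ne' ha0.ne']; ring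
    have h2 : a * Real.log (b/a) ≤ a * ((b/a - a/b)/2) :=
      mul_le_mul_of_nonneg_left h ha0.le
    have heq : a * ((b/a - a/b)/2) = (b^2 - a^2)/(2*b) := by
      field_simp
    rw [heq] at h2
    rw [hlog]
    have hgoal : (a - b) + (a - b)^2/2 ≤ -((b^2 - a^2)/(2*b)) := by
      rw [← sub_nonneg]
      have he : -((b^2 - a^2)/(2*b)) - ((a - b) + (a - b)^2/2) = (a-b)^2*(1-b)/(2*b) := by
        field_simp
        ring
      rw [he]
      have : (0:ℝ) ≤ (a-b)^2*(1-b) := mul_nonneg (sq_nonneg _) (by linarith)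
      positivity
    linarith

set_option maxHeartbeats 2000000 in
/-- KL contraction of the projected forward step on the interior of the simplex:
if `g` is `μ`-strongly monotone and `L`-Lipschitz on `Δ°`, `γ = η(2μ − ηL²) ∈ [0,1]`,
and the projected images have all coordinates at least `δ`, then
`D_KL(F_η p₁ ‖ F_η p₂) ≤ (2(1−γ)/δ) · D_KL(p₁ ‖ p₂)`. -/
theorem kl_contraction_projected_step
    (C : ℕ) (hC : 1 ≤ C)
    (proj : EuclideanSpace ℝ (Fin C) → EuclideanSpace ℝ (Fin C))
    (hProjMem : ∀ x, proj x ∈ probSimplex C)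
    (hProjNear : ∀ x, ∀ y ∈ probSimplex C, ‖x - proj x‖ ≤ ‖x - y‖)
    (g : EuclideanSpace ℝ (Fin C) → EuclideanSpace ℝ (Fin C)) (μ L : ℝ)
    (hmono : ∀ p₁ ∈ simplexInterior C, ∀ p₂ ∈ simplexInterior C,
      μ * ‖p₁ - p₂‖ ^ 2 ≤ ⟪g p₁ - g p₂, p₁ - p₂⟫)
    (hlip : ∀ p₁ ∈ simplexInterior C, ∀ p₂ ∈ simplexInterior C,
      ‖g p₁ - g p₂‖ ≤ L * ‖p₁ - p₂‖)
    (η : ℝ) (hη : 0 ≤ η)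
    (F : EuclideanSpace ℝ (Fin C) → EuclideanSpace ℝ (Fin C))
    (hF : ∀ p, F p = proj (p - η • g p))
    (γ : ℝ) (hγ : γ = η * (2 * μ - η * L ^ 2)) (hγ0 : 0 ≤ γ) (hγ1 : γ ≤ 1)
    (δ : ℝ) (hδ : 0 < δ) :
    ∀ p₁ ∈ simplexInterior C, ∀ p₂ ∈ simplexInterior C,
      (∀ i, δ ≤ F p₁ i) → (∀ i, δ ≤ F p₂ i) →
      DKL (F p₁) (F p₂) ≤ (2 * (1 - γ) / δ) * DKL p₁ p₂ := by
  intro p₁ hp₁ p₂ hp₂ hF₁ hF₂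
  have normsq : ∀ x : EuclideanSpace ℝ (Fin C), ‖x‖^2 = ∑ i, (x i)^2 := by
    intro x
    rw [EuclideanSpace.norm_eq, Real.sq_sqrt (by positivity)]
    simp [sq_abs]
  -- convexity of the simplex
  have hconv : Convex ℝ (probSimplex C) := by
    intro u hu v hv s t hs ht hst
    refine ⟨fun i => ?_, ?_⟩
    · have h1 := hu.1 i
      have h2 := hv.1 i
      simp only [PiLp.add_apply, PiLp.smul_apply, smul_eq_mul]
      exact add_nonneg (mul_nonneg hs h1) (mul_nonneg ht h2)
    · simp only [PiLp.add_apply, PiLp.smul_apply, smul_eq_mul]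
      rw [Finset.sum_add_distrib, ← Finset.mul_sum, ← Finset.mul_sum, hu.2, hv.2]
      simpa using hst
  -- variational inequality for the projection
  have hvar : ∀ x, ∀ w ∈ probSimplex C, ⟪ x - proj x, w - proj x ⟫ ≤ 0 := by
    intro x
    haveI : Nonempty ↑(probSimplex C) := ⟨⟨proj x, hProjMem x⟩⟩
    have hbdd : BddBelow (Set.range fun w : probSimplex C => ‖x - (w : EuclideanSpace ℝ (Fin C))‖) := by
      refine ⟨0, ?_⟩
      rintro r ⟨w, rfl⟩
      exact norm_nonneg _
    have h1 : ‖x - proj x‖ ≤ ⨅ w : probSimplex C, ‖x - w‖ :=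
      le_ciInf fun w => hProjNear x w w.2
    have h2 : (⨅ w : probSimplex C, ‖x - w‖) ≤ ‖x - proj x‖ :=
      ciInf_le hbdd ⟨proj x, hProjMem x⟩
    exact (norm_eq_iInf_iff_real_inner_le_zero hconv (hProjMem x)).mp (le_antisymm h1 h2)
  -- nonexpansiveness
  have hne : ∀ x y, ‖proj x - proj y‖ ≤ ‖x - y‖ := by
    intro x y
    have h1 := hvar x (proj y) (hProjMem y)
    have h2 := hvar y (proj x) (hProjMem x)
    have e1 : (0:ℝ) ≤ ⟪ x - proj x, proj x - proj y ⟫ := by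
      have h1' : ⟪ x - proj x, -(proj x - proj y) ⟫ ≤ 0 := by rw [neg_sub]; exact h1
      rw [inner_neg_right] at h1'
      linarith
    have e3 : ‖proj x - proj y‖^2 ≤ ⟪ x - y, proj x - proj y ⟫ := by
      have expand : ⟪ x - y, proj x - proj y ⟫
          = ⟪ x - proj x, proj x - proj y ⟫ - ⟪ y - proj y, proj x - proj y ⟫
            + ⟪ proj x - proj y, proj x - proj y ⟫ := by
        rw [← inner_sub_left, ← inner_add_left]
        congr 1
        abel
      rw [expand, real_inner_self_eq_norm_sq]
      linarith
    have e4 : ⟪ x - y, proj x - proj y ⟫ ≤ ‖x - y‖ * ‖proj x - proj y‖ :=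
      real_inner_le_norm _ _
    nlinarith [norm_nonneg (proj x - proj y), norm_nonneg (x - y)]
  -- Euclidean contraction of the forward step
  have hcontr : ‖F p₁ - F p₂‖^2 ≤ (1-γ)*‖p₁-p₂‖^2 := by
    have step1 : ‖F p₁ - F p₂‖ ≤ ‖(p₁ - p₂) - η•(g p₁ - g p₂)‖ := by
      rw [hF, hF]
      have heq : (p₁ - η•g p₁) - (p₂ - η•g p₂) = (p₁ - p₂) - η•(g p₁ - g p₂) := by
        rw [smul_sub]; abel
      rw [← heq]
      exact hne _ _
    have expand : ‖(p₁-p₂) - η•(g p₁ - g p₂)‖^2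
        = ‖p₁-p₂‖^2 - 2*(η*⟪ g p₁ - g p₂, p₁-p₂ ⟫) + η^2*‖g p₁-g p₂‖^2 := by
      rw [norm_sub_sq_real, real_inner_smul_right, norm_smul, real_inner_comm]
      simp only [Real.norm_eq_abs, mul_pow, sq_abs]
    have hm := hmono p₁ hp₁ p₂ hp₂
    have hl := hlip p₁ hp₁ p₂ hp₂
    have hl2 : ‖g p₁ - g p₂‖^2 ≤ L^2*‖p₁-p₂‖^2 := by
      nlinarith [norm_nonneg (g p₁ - g p₂), norm_nonneg (p₁ - p₂)]
    have step2 : ‖F p₁ - F p₂‖^2 ≤ ‖(p₁-p₂) - η•(g p₁ - g p₂)‖^2 :=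
      pow_le_pow_left₀ (norm_nonneg _) step1 2
    have hm' : η*(μ*‖p₁-p₂‖^2) ≤ η*⟪ g p₁ - g p₂, p₁-p₂ ⟫ :=
      mul_le_mul_of_nonneg_left hm hη
    have hl2' : η^2*‖g p₁-g p₂‖^2 ≤ η^2*(L^2*‖p₁-p₂‖^2) :=
      mul_le_mul_of_nonneg_left hl2 (sq_nonneg η)
    rw [hγ]
    nlinarith [step2, expand]
  have hγ1' : (0:ℝ) ≤ 1 - γ := by linarith
  -- sums of coordinates
  have hFsum1 : ∑ i, F p₁ i = 1 := by rw [hF]; exact (hProjMem _).2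
  have hFsum2 : ∑ i, F p₂ i = 1 := by rw [hF]; exact (hProjMem _).2
  -- upper bound on DKL of images
  have hupper : DKL (F p₁) (F p₂) ≤ ‖F p₁ - F p₂‖^2/δ := by
    have hpt : ∀ i, F p₁ i * Real.log (F p₁ i / F p₂ i)
        ≤ (F p₁ i - F p₂ i) + (F p₁ i - F p₂ i)^2/δ := by
      intro i
      exact chi_pt hδ (le_trans hδ.le (hF₁ i)) (hF₂ i)
    have hsum := Finset.sum_le_sum (fun i (_ : i ∈ Finset.univ) => hpt i)
    rw [normsq]
    have hdiff : ∑ i, ((F p₁ i - F p₂ i) + (F p₁ i - F p₂ i)^2/δ)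
        = (∑ i, (F p₁ i - F p₂ i)^2)/δ := by
      rw [Finset.sum_add_distrib, Finset.sum_sub_distrib, hFsum1, hFsum2,
        ← Finset.sum_div]
      ring
    have hcoord : ∀ i, (F p₁ - F p₂) i = F p₁ i - F p₂ i := fun i => rfl
    unfold DKL
    calc ∑ i, F p₁ i * Real.log (F p₁ i / F p₂ i)
        ≤ ∑ i, ((F p₁ i - F p₂ i) + (F p₁ i - F p₂ i)^2/δ) := hsum
      _ = (∑ i, (F p₁ i - F p₂ i)^2)/δ := hdiff
      _ = (∑ i, ((F p₁ - F p₂) i)^2)/δ := by simp [hcoord]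
  -- lower bound on DKL of preimages (Pinsker)
  have hlower : ‖p₁ - p₂‖^2/2 ≤ DKL p₁ p₂ := by
    have hle1 : ∀ i, p₁ i ≤ 1 := by
      intro i
      rw [← hp₁.2]
      exact Finset.single_le_sum (fun j _ => (hp₁.1 j).le) (Finset.mem_univ i)
    have hle2 : ∀ i, p₂ i ≤ 1 := by
      intro i
      rw [← hp₂.2]
      exact Finset.single_le_sum (fun j _ => (hp₂.1 j).le) (Finset.mem_univ i)
    have hpt : ∀ i, (p₁ i - p₂ i) + (p₁ i - p₂ i)^2/2
        ≤ p₁ i * Real.log (p₁ i / p₂ i) := fun i =>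
      pinsker_pt (hp₁.1 i) (hle1 i) (hp₂.1 i) (hle2 i)
    have hsum := Finset.sum_le_sum (fun i (_ : i ∈ Finset.univ) => hpt i)
    have hdiff : ∑ i, ((p₁ i - p₂ i) + (p₁ i - p₂ i)^2/2)
        = (∑ i, (p₁ i - p₂ i)^2)/2 := by
      rw [Finset.sum_add_distrib, Finset.sum_sub_distrib, hp₁.2, hp₂.2,
        ← Finset.sum_div]
      ring
    have hcoord : ∀ i, (p₁ - p₂) i = p₁ i - p₂ i := fun i => rfl
    rw [normsq]
    unfold DKL
    calc (∑ i, ((p₁ - p₂) i)^2)/2 = (∑ i, (p₁ i - p₂ i)^2)/2 := by simp [hcoord]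
      _ = ∑ i, ((p₁ i - p₂ i) + (p₁ i - p₂ i)^2/2) := hdiff.symm
      _ ≤ ∑ i, p₁ i * Real.log (p₁ i / p₂ i) := hsum
  -- combine
  calc DKL (F p₁) (F p₂) ≤ ‖F p₁ - F p₂‖^2/δ := hupper
    _ ≤ ((1-γ)*‖p₁-p₂‖^2)/δ := by gcongr
    _ ≤ ((1-γ)*(2*DKL p₁ p₂))/δ := by
        have : ‖p₁-p₂‖^2 ≤ 2*DKL p₁ p₂ := by linarith
        gcongr
    _ = (2*(1-γ)/δ)*DKL p₁ p₂ := by ring
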